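/- arXiv:2304.01072 — 3 statements merged into one kernel-verified Lean document; each statement's English description precedes it below -/
import Mathlib

section
/- For the W state |ψ⟩ = |001⟩ + |010⟩ + |100⟩ ∈ ℂ²⊗ℂ²⊗ℂ², the reduced density matrix ρ_BC obtained by tracing out the first qubit has rank 2, and its range contains exactly one simple tensor up to nonzero scalar, namely |00⟩. -/
/-- The W state `|001⟩ + |010⟩ + |100⟩`. -/
noncomputable def wState : Fin 2 → Fin 2 → Fin 2 → ℂ := fun a b c =>
  (if a = 0 ∧ b = 0 ∧ c = 1 then 1 else 0) + (if a = 0 ∧ b = 1 ∧ c = 0 then 1 else 0)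
    + (if a = 1 ∧ b = 0 ∧ c = 0 then 1 else 0)

/-- Reduced density matrix on B,C: partial trace over the first qubit. -/
noncomputable def rhoBC (ψ : Fin 2 → Fin 2 → Fin 2 → ℂ) :
    Matrix (Fin 2 × Fin 2) (Fin 2 × Fin 2) ℂ :=
  Matrix.of fun p q => ∑ a : Fin 2, ψ a p.1 p.2 * (starRingEnd ℂ) (ψ a q.1 q.2)

/-- The basis vector `|00⟩` of `ℂ²⊗ℂ²`. -/
noncomputable def e00 : Fin 2 × Fin 2 → ℂ := fun p => if p = (0, 0) then 1 else 0

/-- The vector `|01⟩ + |10⟩`. -/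
noncomputable def fW : Fin 2 × Fin 2 → ℂ := fun p =>
  if p = ((0 : Fin 2), (1 : Fin 2)) ∨ p = ((1 : Fin 2), (0 : Fin 2)) then 1 else 0

lemma key (w : Fin 2 × Fin 2 → ℂ) :
    (rhoBC wState).mulVec w = w (0, 0) • e00 + (w (0, 1) + w (1, 0)) • fW := by
  funext p
  rcases p with ⟨p1, p2⟩
  fin_cases p1 <;> fin_cases p2 <;>
    simp [rhoBC, wState, Matrix.mulVec, dotProduct, e00, fW,
      Fin.sum_univ_two, Fintype.sum_prod_type, Prod.ext_iff] <;> ring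

lemma li : LinearIndependent ℂ ![e00, fW] := by
  rw [LinearIndependent.pair_iff]
  intro s t h
  have h1 := congrFun h (0, 0)
  have h2 := congrFun h (0, 1)
  simp [e00, fW, Prod.ext_iff] at h1 h2
  exact ⟨h1, h2⟩

lemma range_eq :
    LinearMap.range (Matrix.mulVecLin (rhoBC wState)) =
      Submodule.span ℂ (Set.range ![e00, fW]) := by
  apply le_antisymm
  · rintro v ⟨w, rfl⟩
    rw [Matrix.mulVecLin_apply, key]
    have h0 : e00 ∈ Submodule.span ℂ (Set.range ![e00, fW]) :=
      Submodule.subset_span ⟨0, rfl⟩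
    have h1 : fW ∈ Submodule.span ℂ (Set.range ![e00, fW]) :=
      Submodule.subset_span ⟨1, rfl⟩
    exact Submodule.add_mem _ (Submodule.smul_mem _ _ h0) (Submodule.smul_mem _ _ h1)
  · rw [Submodule.span_le]
    rintro v ⟨i, rfl⟩
    fin_cases i
    · refine ⟨e00, ?_⟩
      rw [Matrix.mulVecLin_apply, key]
      funext p
      simp [e00, fW, Prod.ext_iff]
    · refine ⟨(fun p => if p = ((0 : Fin 2), (1 : Fin 2)) then 1 else 0), ?_⟩
      rw [Matrix.mulVecLin_apply, key]
      funext p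
      simp [e00, fW, Prod.ext_iff]

theorem rhoBC_wState :
    (rhoBC wState).rank = 2 ∧
      (∃ w, (rhoBC wState).mulVec w = e00) ∧
      ∀ v : Fin 2 × Fin 2 → ℂ, (∃ w, (rhoBC wState).mulVec w = v) →
        v (0, 0) * v (1, 1) = v (0, 1) * v (1, 0) →
        ∃ s : ℂ, v = s • e00 := by
  refine ⟨?_, ⟨e00, ?_⟩, ?_⟩
  · rw [Matrix.rank, range_eq, finrank_span_eq_card li]
    simp
  · rw [key]
    funext p
    simp [e00, fW, Prod.ext_iff]
  · rintro v ⟨w, rfl⟩ hdet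
    rw [key] at hdet ⊢
    set t := w (0, 1) + w (1, 0) with ht
    have h00 : (w (0, 0) • e00 + t • fW) (0, 0) = w (0, 0) := by
      simp [e00, fW, Prod.ext_iff]
    have h11 : (w (0, 0) • e00 + t • fW) (1, 1) = 0 := by
      simp [e00, fW, Prod.ext_iff]
    have h01 : (w (0, 0) • e00 + t • fW) (0, 1) = t := by
      simp [e00, fW, Prod.ext_iff]
    have h10 : (w (0, 0) • e00 + t • fW) (1, 0) = t := by
      simp [e00, fW, Prod.ext_iff]
    rw [h00, h11, h01, h10, mul_zero] at hdet
    have ht0 : t = 0 := by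
      have := mul_self_eq_zero.mp hdet.symm
      exact this
    refine ⟨w (0, 0), ?_⟩
    rw [ht0, zero_smul, add_zero]
end

section
/- The W state |001⟩ + |010⟩ + |100⟩ ∈ ℂ²⊗ℂ²⊗ℂ² cannot be written as the sum of two simple tensors u₁⊗v₁⊗w₁ + u₂⊗v₂⊗w₂; i.e., its tensor rank is at least 3. -/
/-- The W state is not a sum of two simple tensors: its tensor rank is at least 3. -/
theorem w_tensor_rank_ge_three :
    ¬ ∃ u₁ v₁ w₁ u₂ v₂ w₂ : Fin 2 → ℂ,
      ∀ a b c : Fin 2, wState a b c = u₁ a * v₁ b * w₁ c + u₂ a * v₂ b * w₂ c := by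
  rintro ⟨u₁, v₁, w₁, u₂, v₂, w₂, h⟩
  have e000 := h 0 0 0
  have e001 := h 0 0 1
  have e010 := h 0 1 0
  have e011 := h 0 1 1
  have e100 := h 1 0 0
  have e101 := h 1 0 1
  have e110 := h 1 1 0
  have e111 := h 1 1 1
  norm_num [wState] at e000 e001 e010 e011 e100 e101 e110 e111
  set a := u₁ 0 with ha'
  set A := u₁ 1 with hA'
  set b := v₁ 0 with hb'
  set B := v₁ 1 with hB'
  set c := w₁ 0 with hc'
  set C := w₁ 1 with hC'
  set p := u₂ 0 with hp'
  set P := u₂ 1 with hP'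
  set q := v₂ 0 with hq'
  set Q := v₂ 1 with hQ'
  set r := w₂ 0 with hr'
  set R := w₂ 1 with hR'
  set m := b*c*Q*R + B*C*q*r - b*C*Q*r - B*c*q*R with hm'
  -- determinant of the a = 0 slice
  have h1 : a * p * m = -1 := by
    linear_combination (-(a*B*C + p*Q*R))*e000 + (a*B*c + p*Q*r)*e001 + e010
  -- determinant of the (slice 0) + (slice 1) pencil
  have h2 : (a + A) * (p + P) * m = -1 := by
    linear_combination (-(a*B*C + p*Q*R + A*B*C + P*Q*R))*(e000 + e100) - (e011 + e111)
      + (a*B*c + p*Q*r + A*B*c + P*Q*r)*(e001 + e101) + (e010 + e110)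
  -- determinant of the (slice 0) - (slice 1) pencil
  have h3 : (a - A) * (p - P) * m = -1 := by
    linear_combination (-(a*B*C + p*Q*R - A*B*C - P*Q*R))*(e000 - e100) + (e011 - e111)
      + (a*B*c + p*Q*r - A*B*c - P*Q*r)*(e001 - e101) + (e010 - e110)
  have hAP : A * P * m = 0 := by linear_combination (1/2 : ℂ) * h2 + (1/2 : ℂ) * h3 - h1
  have hS : (a * P + A * p) * m = 0 := by linear_combination (1/2 : ℂ) * h2 - (1/2 : ℂ) * h3
  have hne : a * p * m ≠ 0 := by rw [h1]; norm_num
  have hm : m ≠ 0 := right_ne_zero_of_mul hne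
  have hap : a * p ≠ 0 := left_ne_zero_of_mul hne
  have ha : a ≠ 0 := left_ne_zero_of_mul hap
  have hp : p ≠ 0 := right_ne_zero_of_mul hap
  have hS' : a * P + A * p = 0 := (mul_eq_zero.mp hS).resolve_right hm
  have hAP' : A = 0 ∨ P = 0 := mul_eq_zero.mp ((mul_eq_zero.mp hAP).resolve_right hm)
  have hA0 : A = 0 ∧ P = 0 := by
    rcases hAP' with h0 | h0
    · refine ⟨h0, ?_⟩
      rw [h0] at hS'
      simpa [ha] using hS'
    · refine ⟨?_, h0⟩
      rw [h0] at hS'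
      simpa [hp] using hS'
  rw [hA0.1, hA0.2] at e100
  simp at e100
end

section
/- For real δ with 0 < δ < 1, let W ⊂ ℂ⁴ be the span of the vectors (δ, 1, 1, δ) and (1, δ, δ, 2). Then the set of nonzero simple tensors in W (under the identification ℂ⁴ ≅ ℂ²⊗ℂ²) consists of exactly two distinct 1-dimensional subspaces. -/
/-!
Writing `A = !![δ, 1; 1, δ]` and `B = !![1, δ; δ, 2]`, the determinant of `x • A + y • B` is the
binary quadratic form `(δ² - 1) x² + δ x y + (2 - δ²) y²`. Its discriminant `4δ⁴ - 11δ² + 8` has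
no real zeros, and its leading coefficient is nonzero for `0 < δ < 1`, so over `ℂ` it factors as
`(δ² - 1) (x - r₁ y) (x - r₂ y)` with `r₁ ≠ r₂`. The simple tensors of the span are therefore the
nonzero multiples of `r₁ • A + B` and of `r₂ • A + B`, and these two lines are distinct because
`A` and `B` are linearly independent.
-/

open Submodule

theorem exists_quadratic_eq_mul_sub_mul_sub {K : Type*} [Field K] [IsAlgClosed K]
    [NeZero (2 : K)] {a b c : K} (ha : a ≠ 0) (hd : discrim a b c ≠ 0) :
    ∃ r₁ r₂ : K, r₁ ≠ r₂ ∧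
      ∀ x y : K, a * x ^ 2 + b * x * y + c * y ^ 2 = a * (x - r₁ * y) * (x - r₂ * y) := by
  obtain ⟨s, hs⟩ := IsAlgClosed.exists_eq_mul_self (discrim a b c)
  have hs0 : s ≠ 0 := by rintro rfl; exact hd (by rw [hs, mul_zero])
  have h2a : 2 * a ≠ 0 := mul_ne_zero two_ne_zero ha
  refine ⟨(-b + s) / (2 * a), (-b - s) / (2 * a), ?_, fun x y => ?_⟩
  · rw [Ne, div_left_inj' h2a]
    intro h
    have h2s : 2 * s = 0 := by linear_combination h
    exact hs0 ((mul_eq_zero.mp h2s).resolve_left two_ne_zero)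
  · rw [discrim] at hs
    field_simp
    linear_combination (-y ^ 2) * hs

section TwoLines

variable {K V : Type*} [Field K] [AddCommGroup V] [Module K V] {A B v : V} {r r₁ r₂ : K}

theorem smul_add_ne_zero (hAB : LinearIndependent K ![A, B]) : r • A + B ≠ 0 := by
  intro h
  exact one_ne_zero (hAB.eq_zero_of_pair (s := r) (t := 1) (by rwa [one_smul])).2

theorem span_singleton_smul_add_ne (hAB : LinearIndependent K ![A, B]) (h : r₁ ≠ r₂) :
    span K {r₁ • A + B} ≠ span K {r₂ • A + B} := by
  intro hspan
  have hmem : r₂ • A + B ∈ span K {r₁ • A + B} := hspan ▸ mem_span_singleton_self _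
  obtain ⟨c, hc⟩ := mem_span_singleton.mp hmem
  obtain ⟨hr, hc1⟩ := hAB.eq_of_pair (s := c * r₁) (t := c) (s' := r₂) (t' := 1)
    (by rw [one_smul, ← hc, smul_add, smul_smul])
  rw [hc1, one_mul] at hr
  exact h hr

theorem smul_add_mem_span_pair : r • A + B ∈ span K {A, B} :=
  mem_span_pair.mpr ⟨r, 1, by rw [one_smul]⟩

theorem mem_span_pair_and_eq_zero_iff {f : V → K} {a : K} (ha : a ≠ 0)
    (hf : ∀ x y : K, f (x • A + y • B) = a * (x - r₁ * y) * (x - r₂ * y)) :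
    v ∈ span K {A, B} ∧ f v = 0 ↔ v ∈ span K {r₁ • A + B} ∨ v ∈ span K {r₂ • A + B} := by
  have smul_smul_add (c r : K) : c • (r • A + B) = (c * r) • A + c • B := by
    rw [smul_add, smul_smul]
  constructor
  · rintro ⟨hv, hfv⟩
    obtain ⟨x, y, rfl⟩ := mem_span_pair.mp hv
    rw [hf, mul_assoc, mul_eq_zero, mul_eq_zero, sub_eq_zero, sub_eq_zero] at hfv
    rcases hfv with ha0 | rfl | rfl
    · exact absurd ha0 ha
    · exact Or.inl (mem_span_singleton.mpr ⟨y, by rw [smul_smul_add, mul_comm]⟩)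
    · exact Or.inr (mem_span_singleton.mpr ⟨y, by rw [smul_smul_add, mul_comm]⟩)
  · rintro (hv | hv) <;> obtain ⟨c, rfl⟩ := mem_span_singleton.mp hv <;>
      exact ⟨smul_mem _ c smul_add_mem_span_pair, by rw [smul_smul_add, hf]; ring⟩

end TwoLines

theorem det_smul_add_smul (δ x y : ℂ) :
    (x • !![δ, 1; 1, δ] + y • !![1, δ; δ, 2]).det =
      (δ ^ 2 - 1) * x ^ 2 + δ * x * y + (2 - δ ^ 2) * y ^ 2 := by
  simp only [Matrix.det_fin_two, Matrix.add_apply, Matrix.smul_apply, smul_eq_mul,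
    Matrix.of_apply, Matrix.cons_val', Matrix.cons_val_zero, Matrix.cons_val_one,
    Matrix.empty_val', Matrix.cons_val_fin_one]
  ring

theorem discrim_det_smul_add_smul_ne_zero (δ : ℝ) :
    discrim ((δ : ℂ) ^ 2 - 1) (δ : ℂ) (2 - (δ : ℂ) ^ 2) ≠ 0 := by
  have hreal : discrim ((δ : ℂ) ^ 2 - 1) (δ : ℂ) (2 - (δ : ℂ) ^ 2) =
      ((4 * δ ^ 4 - 11 * δ ^ 2 + 8 : ℝ) : ℂ) := by
    rw [discrim]
    push_cast
    ring
  -- `4α² - 11α + 8 = 4 (α - 11/8)² + 7/16`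
  have hpos : 0 < 4 * δ ^ 4 - 11 * δ ^ 2 + 8 := by nlinarith [sq_nonneg (δ ^ 2 - 11 / 8)]
  rw [hreal]
  exact_mod_cast hpos.ne'

theorem linearIndependent_matrix_pair (δ : ℂ) :
    LinearIndependent ℂ ![!![δ, 1; 1, δ], !![1, δ; δ, 2]] := by
  refine LinearIndependent.pair_iff.mpr fun s t h => ?_
  have h00 := congrFun (congrFun h 0) 0
  have h01 := congrFun (congrFun h 0) 1
  have h11 := congrFun (congrFun h 1) 1
  simp only [Matrix.add_apply, Matrix.smul_apply, smul_eq_mul, Matrix.of_apply,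
    Matrix.cons_val', Matrix.cons_val_zero, Matrix.cons_val_one, Matrix.empty_val',
    Matrix.cons_val_fin_one, Matrix.zero_apply] at h00 h01 h11
  have ht : t = 0 := by linear_combination h11 - h00
  exact ⟨by linear_combination h01 - δ * ht, ht⟩

/-- For `0 < δ < 1`, the span of `(δ,1,1,δ)` and `(1,δ,δ,2)` in `ℂ²⊗ℂ²` (identified
with 2×2 matrices, simple tensors being those of vanishing determinant) contains
exactly two 1-dimensional subspaces of nonzero simple tensors. -/
theorem two_simple_lines (δ : ℝ) (hδ0 : 0 < δ) (hδ1 : δ < 1) :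
    ∃ L₁ L₂ : Submodule ℂ (Matrix (Fin 2) (Fin 2) ℂ), L₁ ≠ L₂ ∧
      Module.finrank ℂ L₁ = 1 ∧ Module.finrank ℂ L₂ = 1 ∧
      L₁ ≤ Submodule.span ℂ {!![(δ : ℂ), 1; 1, (δ : ℂ)], !![1, (δ : ℂ); (δ : ℂ), 2]} ∧
      L₂ ≤ Submodule.span ℂ {!![(δ : ℂ), 1; 1, (δ : ℂ)], !![1, (δ : ℂ); (δ : ℂ), 2]} ∧
      {v : Matrix (Fin 2) (Fin 2) ℂ |
          v ∈ Submodule.span ℂ {!![(δ : ℂ), 1; 1, (δ : ℂ)], !![1, (δ : ℂ); (δ : ℂ), 2]} ∧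
          v ≠ 0 ∧ v.det = 0}
        = ((L₁ : Set _) ∪ (L₂ : Set _)) \ {0} := by
  have ha : (δ : ℂ) ^ 2 - 1 ≠ 0 := by
    have : δ ^ 2 - 1 ≠ 0 := by nlinarith
    exact_mod_cast this
  obtain ⟨r₁, r₂, hr, hfac⟩ :=
    exists_quadratic_eq_mul_sub_mul_sub ha (discrim_det_smul_add_smul_ne_zero δ)
  have hdet (x y : ℂ) := (det_smul_add_smul δ x y).trans (hfac x y)
  have hAB := linearIndependent_matrix_pair δ
  refine ⟨span ℂ {r₁ • _ + _}, span ℂ {r₂ • _ + _}, span_singleton_smul_add_ne hAB hr,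
    finrank_span_singleton (smul_add_ne_zero hAB), finrank_span_singleton (smul_add_ne_zero hAB),
    (span_singleton_le_iff_mem _ _).mpr smul_add_mem_span_pair,
    (span_singleton_le_iff_mem _ _).mpr smul_add_mem_span_pair, ?_⟩
  ext v
  have hv := mem_span_pair_and_eq_zero_iff (v := v) ha hdet
  simp only [Set.mem_ofPred_eq, Set.mem_sdiff, Set.mem_union, SetLike.mem_coe,
    Set.mem_singleton_iff]
  tauto
end
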